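/- In CP_mem, the equation x ◁ y ▷ ((z ◁ y ▷ u) ◁ v ▷ w) = x ◁ y ▷ (u ◁ v ▷ w) is derivable. -/

import Mathlib

inductive CE (A : Type) : Type
  | tt : CE A
  | ff : CE A
  | atom : A → CE A
  | cond : CE A → CE A → CE A → CE A

inductive Deriv {A : Type} (Ax : CE A → CE A → Prop) : CE A → CE A → Prop
  | ax {t t'} : Ax t t' → Deriv Ax t t'
  | refl (t) : Deriv Ax t t
  | symm {t t'} : Deriv Ax t t' → Deriv Ax t' t
  | trans {t t' t''} : Deriv Ax t t' → Deriv Ax t' t'' → Deriv Ax t t''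
  | congr {x x' y y' z z'} : Deriv Ax x x' → Deriv Ax y y' → Deriv Ax z z' →
      Deriv Ax (.cond x y z) (.cond x' y' z')
  | cp1 (x y) : Deriv Ax (.cond x .tt y) x
  | cp2 (x y) : Deriv Ax (.cond x .ff y) y
  | cp3 (x) : Deriv Ax (.cond .tt x .ff) x
  | cp4 (x y z u v) : Deriv Ax (.cond x (.cond y z u) v) (.cond (.cond x y v) z (.cond x u v))

/-- Derivability from the CP axioms alone (no extra axioms). -/
def CP {A : Type} : CE A → CE A → Prop := Deriv (fun _ _ => False)

/-- The axiom (CPmem): x ◁ y ▷ (z ◁ u ▷ (v ◁ y ▷ w)) = x ◁ y ▷ (z ◁ u ▷ w). -/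
def AxMem {A : Type} : CE A → CE A → Prop := fun s t =>
  ∃ x y z u v w : CE A,
    s = .cond x y (.cond z u (.cond v y w)) ∧ t = .cond x y (.cond z u w)

namespace Deriv

variable {A : Type} {Ax : CE A → CE A → Prop}

lemma cond_else {x y z z' : CE A} (h : Deriv Ax z z') :
    Deriv Ax (.cond x y z) (.cond x y z') :=
  congr (refl x) (refl y) h

lemma cond_swap (a b c : CE A) :
    Deriv Ax (.cond a b c) (.cond c (.cond .ff b .tt) a) :=
  symm <| (cp4 c .ff b .tt a).trans (congr (cp2 c a) (refl b) (cp1 c a))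

end Deriv

/- Swapping the branches of `(z ◁ y ▷ u) ◁ v ▷ w` moves `z ◁ y ▷ u` into the else-branch of a
conditional inside the else-branch of `x ◁ y ▷ _`, exactly where (CPmem) deletes it. -/
theorem cpmem_symmetric_variant (A : Type) (x y z u v w : CE A) :
    Deriv AxMem (.cond x y (.cond (.cond z y u) v w)) (.cond x y (.cond u v w)) := by
  have swap_inner : Deriv AxMem (.cond x y (.cond (.cond z y u) v w))
      (.cond x y (.cond w (.cond .ff v .tt) (.cond z y u))) :=
    Deriv.cond_else (Deriv.cond_swap _ v w)
  have mem : Deriv AxMem (.cond x y (.cond w (.cond .ff v .tt) (.cond z y u)))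
      (.cond x y (.cond w (.cond .ff v .tt) u)) :=
    Deriv.ax ⟨x, y, w, _, z, u, rfl, rfl⟩
  exact (swap_inner.trans mem).trans (Deriv.cond_else (Deriv.cond_swap u v w).symm)
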